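/- Let n be even, m > 1, k = 2^{m−1}, and let f : 𝔽₂ⁿ → ℤ_{2^m} be a self-dual bent generalized Boolean function with coefficient functions a₀,…,a_{k−1}. Then for every index i ∈ {0,…,k−1} and every u ∈ 𝔽₂ⁿ, Σ_{x∈𝔽₂ⁿ} (−1)^{u·x} aᵢ(x) = 2^{n/2} aᵢ(u); that is, each aᵢ, viewed as a vector of length 2ⁿ, is an eigenvector of the Sylvester Hadamard matrix Hₙ associated with the eigenvalue 2^{n/2}. -/

import Mathlib

open Finset Matrix

/-- Dot product on 𝔽₂ⁿ. -/
def dotp {n : ℕ} (u x : Fin n → ZMod 2) : ZMod 2 := ∑ j, u j * x j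

/-- The character (−1)^{u·x}. -/
def chi {n : ℕ} (u x : Fin n → ZMod 2) : ℤ := (-1) ^ (dotp u x).val

/-- Walsh–Hadamard transform of a Boolean function. -/
def Wbf {n : ℕ} (g : (Fin n → ZMod 2) → ZMod 2) (u : Fin n → ZMod 2) : ℤ :=
  ∑ x : Fin n → ZMod 2, chi u x * (-1) ^ (g x).val

/-- A Boolean function in an even number `n` of variables is bent. -/
def IsBentBF {n : ℕ} (g : (Fin n → ZMod 2) → ZMod 2) : Prop :=
  ∀ u, Wbf g u = 2 ^ (n / 2) ∨ Wbf g u = -(2 ^ (n / 2))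

/-- `ghat` is the dual of the bent Boolean function `g`. -/
def IsDualBF {n : ℕ} (g ghat : (Fin n → ZMod 2) → ZMod 2) : Prop :=
  ∀ u, Wbf g u = 2 ^ (n / 2) * (-1) ^ (ghat u).val

/-- Walsh–Hadamard transform of a generalized Boolean function. -/
noncomputable def Wgbf {n m : ℕ} (ω : ℂ) (f : (Fin n → ZMod 2) → ZMod (2 ^ m)) (u : Fin n → ZMod 2) : ℂ :=
  ∑ x : Fin n → ZMod 2, (chi u x : ℂ) * ω ^ (f x).val

/-- A generalized Boolean function is bent. -/
def IsGBent {n m : ℕ} (ω : ℂ) (f : (Fin n → ZMod 2) → ZMod (2 ^ m)) : Prop :=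
  ∀ u, ‖Wgbf ω f u‖ = Real.sqrt 2 ^ n

/-- A generalized Boolean function is regular bent. -/
def IsRegularGBent {n m : ℕ} (ω : ℂ) (f : (Fin n → ZMod 2) → ZMod (2 ^ m)) : Prop :=
  IsGBent ω f ∧ ∃ fhat : (Fin n → ZMod 2) → ZMod (2 ^ m),
    ∀ u, Wgbf ω f u = (Real.sqrt 2 : ℂ) ^ n * ω ^ (fhat u).val

/-- The Sylvester Hadamard matrix of order 2^s. -/
def sylvester (s : ℕ) : Matrix (Fin (2 ^ s)) (Fin (2 ^ s)) ℤ :=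
  Matrix.of fun i j => (-1) ^ ∑ t ∈ Finset.range s, ((i.val >>> t) % 2) * ((j.val >>> t) % 2)

/-- The Hadamard property for a system of 2^s ±1-valued functions. -/
def HadamardProperty {n : ℕ} (s : ℕ) (G : Fin (2 ^ s) → (Fin n → ZMod 2) → ℤ) : Prop :=
  ∀ x, ∃ ε : ℤ, (ε = 1 ∨ ε = -1) ∧ ∃ c : Fin (2 ^ s),
    (sylvester s).mulVec (fun i => G i x) = fun i => ε * sylvester s i c

/-- A generalized Boolean function is self-dual bent. -/
def IsSelfDualGBent {n m : ℕ} (ω : ℂ) (f : (Fin n → ZMod 2) → ZMod (2 ^ m)) : Prop :=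
  ∀ u, Wgbf ω f u = (Real.sqrt 2 : ℂ) ^ n * ω ^ (f u).val

/-! Expanding `ω ^ f` in the powers `1, ω, …, ω ^ (k - 1)` turns the self-duality identity
`H_f(u) = 2^{n/2} ω^{f(u)}` into an identity between two integer combinations of these powers,
with coefficients `Hₙ aᵢ (u)` and `2^{n/2} aᵢ(u)`. The minimal polynomial of `ω` over `ℚ` is the
cyclotomic polynomial of degree `φ(2^m) = k`, so the powers are linearly independent over `ℤ`
and the coefficients agree. -/

theorem sqrt_two_pow_of_even {n : ℕ} (hn : Even n) :
    (Real.sqrt 2 : ℂ) ^ n = 2 ^ (n / 2) := by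
  obtain ⟨t, rfl⟩ := hn
  rw [← two_mul, Nat.mul_div_cancel_left t two_pos, pow_mul, ← Complex.ofReal_pow,
    Real.sq_sqrt zero_le_two, Complex.ofReal_ofNat]

theorem IsPrimitiveRoot.linearIndependent_int_pow {ω : ℂ} {N : ℕ} (hω : IsPrimitiveRoot ω N)
    (hN : 0 < N) : LinearIndependent ℤ fun i : Fin N.totient => ω ^ (i : ℕ) := by
  have hdeg : (minpoly ℚ ω).natDegree = N.totient := by
    rw [← Polynomial.cyclotomic_eq_minpoly_rat hω hN, Polynomial.natDegree_cyclotomic]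
  rw [← hdeg]
  exact (linearIndependent_pow ω).restrict_scalars' ℤ

theorem Wgbf_eq_sum_coeff {n m : ℕ} {ι : Type*} [Fintype ι] {ω : ℂ}
    {f : (Fin n → ZMod 2) → ZMod (2 ^ m)} {a : ι → (Fin n → ZMod 2) → ℤ} {b : ι → ℂ}
    (ha : ∀ x, ω ^ (f x).val = ∑ i, (a i x : ℂ) * b i) (u : Fin n → ZMod 2) :
    Wgbf ω f u = ∑ i, ((∑ x, chi u x * a i x : ℤ) : ℂ) * b i := by
  simp only [Wgbf, ha, Finset.mul_sum, Int.cast_sum, Int.cast_mul, Finset.sum_mul]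
  rw [Finset.sum_comm]
  simp only [mul_assoc]

/-- each coefficient function of a self-dual bent gBF is an
eigenvector of the Sylvester Hadamard matrix Hₙ (with entries (−1)^{u·x})
for the eigenvalue 2^{n/2}. -/
theorem coefficient_eigenvector_of_selfdual_gbent {n m : ℕ} (hn : Even n) (hm : 1 < m)
    (ω : ℂ) (hω : IsPrimitiveRoot ω (2 ^ m))
    (f : (Fin n → ZMod 2) → ZMod (2 ^ m)) (hf : IsSelfDualGBent ω f)
    (a : Fin (2 ^ (m - 1)) → (Fin n → ZMod 2) → ℤ)
    (ha : ∀ x, ω ^ (f x).val = ∑ i : Fin (2 ^ (m - 1)), (a i x : ℂ) * ω ^ (i : ℕ)) :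
    ∀ (i : Fin (2 ^ (m - 1))) (u : Fin n → ZMod 2),
      ∑ x : Fin n → ZMod 2, chi u x * a i x = 2 ^ (n / 2) * a i u := by
  have hind : LinearIndependent ℤ fun j : Fin (2 ^ (m - 1)) => ω ^ (j : ℕ) := by
    have h := hω.linearIndependent_int_pow (by positivity)
    rwa [Nat.totient_prime_pow Nat.prime_two (by omega), Nat.add_one_sub_one, mul_one] at h
  intro i u
  have hu := hf u
  rw [Wgbf_eq_sum_coeff ha, sqrt_two_pow_of_even hn, ha u, Finset.mul_sum] at hu
  refine Fintype.linearIndependent_iffₛ.mp hind (fun j => ∑ x, chi u x * a j x)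
    (fun j => 2 ^ (n / 2) * a j u) ?_ i
  simpa only [zsmul_eq_mul, Int.cast_mul, Int.cast_pow, Int.cast_ofNat, mul_assoc] using hu
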